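/- Let C be a nonempty closed convex subset of a real Hilbert space H, let (T_i)_{i≥1} be a family of nonexpansive mappings T_i : C → C with ⋂_{i=1}^∞ Fix(T_i) ≠ ∅, and let (μ_i) be reals with 0 < μ_i ≤ μ < 1 for all i ≥ 1. Then: (i) for each x ∈ C and each positive integer k, the limit lim_{n→∞} U_{n,k} x exists; (ii) the mapping W : C → C defined by W x := lim_{n→∞} W_n x = lim_{n→∞} U_{n,1} x is a nonexpansive mapping satisfying Fix(W) = ⋂_{i=1}^∞ Fix(T_i). -/
import Mathlib


open Filter Topology

/-- The mappings `U n k` of Shimoji–Takahashi: `U n k = I` for `k ≥ n+1` and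
`U n k = μ k • T k ∘ U n (k+1) + (1 - μ k) • I` for `k ≤ n`. -/
noncomputable def Umap {H : Type*} [AddCommGroup H] [Module ℝ H]
    (T : ℕ → H → H) (μ : ℕ → ℝ) (n k : ℕ) (x : H) : H :=
  if n + 1 ≤ k then x
  else μ k • T k (Umap T μ n (k + 1) x) + (1 - μ k) • x
termination_by n + 1 - k
decreasing_by omega

/-- The `W`-mapping `W n = U n 1` generated by `T 1, T 2, …` and `μ 1, μ 2, …`. -/
noncomputable def Wmap {H : Type*} [AddCommGroup H] [Module ℝ H]
    (T : ℕ → H → H) (μ : ℕ → ℝ) (n : ℕ) (x : H) : H :=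
  Umap T μ n 1 x

section ST

variable {H : Type*} [AddCommGroup H] [Module ℝ H]

lemma Umap_of_ge (T : ℕ → H → H) (μ : ℕ → ℝ) {n k : ℕ} (h : n + 1 ≤ k) (x : H) :
    Umap T μ n k x = x := by
  rw [Umap, if_pos h]

lemma Umap_of_le (T : ℕ → H → H) (μ : ℕ → ℝ) {n k : ℕ} (h : k ≤ n) (x : H) :
    Umap T μ n k x = μ k • T k (Umap T μ n (k + 1) x) + (1 - μ k) • x := by
  rw [Umap, if_neg (by omega)]

end ST

section ST2

variable {H : Type*} [NormedAddCommGroup H] [InnerProductSpace ℝ H]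
  {C : Set H} {T : ℕ → H → H} {μ : ℕ → ℝ} {μbar : ℝ}

lemma combo_norm_sq (t : ℝ) (u v : H) :
    ‖t • u + (1 - t) • v‖ ^ 2
      = t * ‖u‖ ^ 2 + (1 - t) * ‖v‖ ^ 2 - t * (1 - t) * ‖u - v‖ ^ 2 := by
  simp only [← real_inner_self_eq_norm_sq, inner_add_left, inner_add_right,
    inner_sub_left, inner_sub_right, real_inner_smul_left, real_inner_smul_right,
    real_inner_comm v u]
  ring

lemma Umap_mem (hCcv : Convex ℝ C)
    (hTmaps : ∀ i, 1 ≤ i → Set.MapsTo (T i) C C)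
    (hμbar : μbar < 1) (hμ : ∀ i, 1 ≤ i → 0 < μ i ∧ μ i ≤ μbar)
    (n k : ℕ) (hk : 1 ≤ k) {x : H} (hx : x ∈ C) : Umap T μ n k x ∈ C := by
  rcases le_or_gt (n + 1) k with h | h
  · rw [Umap_of_ge T μ h]; exact hx
  · rw [Umap_of_le T μ (by omega)]
    have ih : Umap T μ n (k + 1) x ∈ C :=
      Umap_mem hCcv hTmaps hμbar hμ n (k + 1) (by omega) hx
    exact hCcv (hTmaps k hk ih) hx (hμ k hk).1.le
      (by linarith [(hμ k hk).2]) (by ring)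
termination_by n + 1 - k
decreasing_by omega

lemma Umap_nonexp (hCcv : Convex ℝ C)
    (hTmaps : ∀ i, 1 ≤ i → Set.MapsTo (T i) C C)
    (hTne : ∀ i, 1 ≤ i → ∀ x ∈ C, ∀ y ∈ C, ‖T i x - T i y‖ ≤ ‖x - y‖)
    (hμbar : μbar < 1) (hμ : ∀ i, 1 ≤ i → 0 < μ i ∧ μ i ≤ μbar)
    (n k : ℕ) (hk : 1 ≤ k) {x y : H} (hx : x ∈ C) (hy : y ∈ C) :
    ‖Umap T μ n k x - Umap T μ n k y‖ ≤ ‖x - y‖ := by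
  rcases le_or_gt (n + 1) k with h | h
  · rw [Umap_of_ge T μ h, Umap_of_ge T μ h]
  · have hkn : k ≤ n := by omega
    rw [Umap_of_le T μ (n := n) (k := k) hkn x, Umap_of_le T μ (n := n) (k := k) hkn y]
    have ih : ‖Umap T μ n (k + 1) x - Umap T μ n (k + 1) y‖ ≤ ‖x - y‖ :=
      Umap_nonexp hCcv hTmaps hTne hμbar hμ n (k + 1) (by omega) hx hy
    have hmx := Umap_mem hCcv hTmaps hμbar hμ n (k + 1) (by omega) hx
    have hmy := Umap_mem hCcv hTmaps hμbar hμ n (k + 1) (by omega) hy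
    have hT := hTne k hk _ hmx _ hmy
    have heq : μ k • T k (Umap T μ n (k + 1) x) + (1 - μ k) • x -
        (μ k • T k (Umap T μ n (k + 1) y) + (1 - μ k) • y)
        = μ k • (T k (Umap T μ n (k + 1) x) - T k (Umap T μ n (k + 1) y))
          + (1 - μ k) • (x - y) := by module
    rw [heq]
    have h1 : 0 < μ k := (hμ k hk).1
    have h2 : μ k < 1 := lt_of_le_of_lt (hμ k hk).2 hμbar
    calc _ ≤ ‖μ k • (T k (Umap T μ n (k + 1) x) - T k (Umap T μ n (k + 1) y))‖
          + ‖(1 - μ k) • (x - y)‖ := norm_add_le _ _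
      _ = μ k * ‖T k (Umap T μ n (k + 1) x) - T k (Umap T μ n (k + 1) y)‖
          + (1 - μ k) * ‖x - y‖ := by
            rw [norm_smul, norm_smul, Real.norm_eq_abs, Real.norm_eq_abs,
              abs_of_pos h1, abs_of_pos (by linarith)]
      _ ≤ μ k * ‖x - y‖ + (1 - μ k) * ‖x - y‖ := by
            have := hT.trans ih
            nlinarith [norm_nonneg (x - y)]
      _ = ‖x - y‖ := by ring
termination_by n + 1 - k
decreasing_by omega

lemma Umap_fixed {p : H} (hfix : ∀ i, 1 ≤ i → T i p = p)
    (n k : ℕ) (hk : 1 ≤ k) : Umap T μ n k p = p := by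
  rcases le_or_gt (n + 1) k with h | h
  · rw [Umap_of_ge T μ h]
  · rw [Umap_of_le T μ (by omega),
      Umap_fixed hfix n (k + 1) (by omega), hfix k hk]
    module
termination_by n + 1 - k
decreasing_by omega

lemma Umap_diff (hCcv : Convex ℝ C)
    (hTmaps : ∀ i, 1 ≤ i → Set.MapsTo (T i) C C)
    (hTne : ∀ i, 1 ≤ i → ∀ x ∈ C, ∀ y ∈ C, ‖T i x - T i y‖ ≤ ‖x - y‖)
    (hμbar : μbar < 1) (hμ : ∀ i, 1 ≤ i → 0 < μ i ∧ μ i ≤ μbar)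
    {p : H} (hp : p ∈ C) (hfix : ∀ i, 1 ≤ i → T i p = p)
    (n k : ℕ) (hk : 1 ≤ k) {x : H} (hx : x ∈ C) :
    ‖Umap T μ (n + 1) k x - Umap T μ n k x‖ ≤ 2 * ‖x - p‖ * μbar ^ (n + 2 - k) := by
  have hμb0 : 0 < μbar := lt_of_lt_of_le (hμ 1 le_rfl).1 (hμ 1 le_rfl).2
  rcases lt_or_ge (n + 1) k with h | h
  · rw [Umap_of_ge T μ (by omega), Umap_of_ge T μ (by omega)]
    simp only [sub_self, norm_zero]
    positivity
  · rcases eq_or_lt_of_le h with h1 | h1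
    · -- k = n + 1
      have hkn : k = n + 1 := h1
      rw [Umap_of_le T μ (le_of_eq hkn), Umap_of_ge T μ (le_of_eq hkn.symm),
        Umap_of_ge T μ (by omega)]
      have heq : μ k • T k x + (1 - μ k) • x - x = μ k • (T k x - x) := by module
      rw [heq, norm_smul, Real.norm_eq_abs, abs_of_pos (hμ k hk).1]
      have hb : ‖T k x - x‖ ≤ 2 * ‖x - p‖ := by
        calc ‖T k x - x‖ ≤ ‖T k x - p‖ + ‖p - x‖ := norm_sub_le_norm_sub_add_norm_sub _ _ _
          _ ≤ ‖x - p‖ + ‖x - p‖ := by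
              have h3 : ‖T k x - p‖ ≤ ‖x - p‖ := by
                have := hTne k hk x hx p hp; rwa [hfix k hk] at this
              have h4 : ‖p - x‖ = ‖x - p‖ := norm_sub_rev _ _
              linarith
          _ = 2 * ‖x - p‖ := by ring
      have hexp : n + 2 - k = 1 := by omega
      rw [hexp, pow_one]
      have hμk := (hμ k hk).2
      nlinarith [norm_nonneg (T k x - x), norm_nonneg (x - p), (hμ k hk).1]
    · -- k ≤ n
      have hkn : k ≤ n := by omega
      rw [Umap_of_le T μ (n := n + 1) (k := k) (by omega) x,
        Umap_of_le T μ (n := n) (k := k) hkn x]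
      have heq : μ k • T k (Umap T μ (n + 1) (k + 1) x) + (1 - μ k) • x -
          (μ k • T k (Umap T μ n (k + 1) x) + (1 - μ k) • x)
          = μ k • (T k (Umap T μ (n + 1) (k + 1) x) - T k (Umap T μ n (k + 1) x)) := by
        module
      rw [heq, norm_smul, Real.norm_eq_abs, abs_of_pos (hμ k hk).1]
      have hm1 := Umap_mem hCcv hTmaps hμbar hμ (n + 1) (k + 1) (by omega) hx
      have hm2 := Umap_mem hCcv hTmaps hμbar hμ n (k + 1) (by omega) hx
      have hT := hTne k hk _ hm1 _ hm2
      have ih := Umap_diff hCcv hTmaps hTne hμbar hμ hp hfix n (k + 1) (by omega) hx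
      have hexp : n + 2 - k = (n + 2 - (k + 1)) + 1 := by omega
      rw [hexp, pow_succ]
      have hμk2 := (hμ k hk).2
      have h5 : ‖T k (Umap T μ (n + 1) (k + 1) x) - T k (Umap T μ n (k + 1) x)‖
          ≤ 2 * ‖x - p‖ * μbar ^ (n + 2 - (k + 1)) := hT.trans ih
      nlinarith [norm_nonneg (T k (Umap T μ (n + 1) (k + 1) x) - T k (Umap T μ n (k + 1) x)),
        (hμ k hk).1, pow_nonneg hμb0.le (n + 2 - (k + 1)), norm_nonneg (x - p)]
termination_by n + 1 - k
decreasing_by omega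

lemma pow_two_sub_le {μbar : ℝ} (hμb0 : 0 < μbar) (hμbar : μbar < 1) (n k : ℕ) :
    μbar ^ (n + 2 - k) ≤ μbar ^ 2 / μbar ^ k * μbar ^ n := by
  rcases le_or_gt k (n + 2) with h | h
  · have heq : μbar ^ (n + 2 - k) * μbar ^ k = μbar ^ 2 * μbar ^ n := by
      rw [← pow_add]; rw [← pow_add]; congr 1; omega
    have hk : (0:ℝ) < μbar ^ k := pow_pos hμb0 k
    rw [div_mul_eq_mul_div, le_div_iff₀ hk, heq]
  · have h1 : n + 2 - k = 0 := by omega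
    rw [h1, pow_zero]
    rw [div_mul_eq_mul_div, ← pow_add, le_div_iff₀ (pow_pos hμb0 k), one_mul]
    exact pow_le_pow_of_le_one hμb0.le hμbar.le (by omega)

end ST2

section ST3

variable {H : Type*} [NormedAddCommGroup H] [InnerProductSpace ℝ H] [CompleteSpace H]
  {C : Set H} {T : ℕ → H → H} {μ : ℕ → ℝ} {μbar : ℝ}

lemma Umap_exists_lim (hCcv : Convex ℝ C)
    (hTmaps : ∀ i, 1 ≤ i → Set.MapsTo (T i) C C)
    (hTne : ∀ i, 1 ≤ i → ∀ x ∈ C, ∀ y ∈ C, ‖T i x - T i y‖ ≤ ‖x - y‖)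
    (hμbar : μbar < 1) (hμ : ∀ i, 1 ≤ i → 0 < μ i ∧ μ i ≤ μbar)
    {p : H} (hp : p ∈ C) (hfix : ∀ i, 1 ≤ i → T i p = p)
    (k : ℕ) (hk : 1 ≤ k) {x : H} (hx : x ∈ C) :
    ∃ L : H, Tendsto (fun n => Umap T μ n k x) atTop (𝓝 L) := by
  have hμb0 : 0 < μbar := lt_of_lt_of_le (hμ 1 le_rfl).1 (hμ 1 le_rfl).2
  have hcs : CauchySeq (fun n => Umap T μ n k x) := by
    apply cauchySeq_of_le_geometric μbar (2 * ‖x - p‖ * (μbar ^ 2 / μbar ^ k)) hμbar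
    intro n
    rw [dist_eq_norm, norm_sub_rev]
    calc ‖Umap T μ (n + 1) k x - Umap T μ n k x‖
        ≤ 2 * ‖x - p‖ * μbar ^ (n + 2 - k) :=
          Umap_diff hCcv hTmaps hTne hμbar hμ hp hfix n k hk hx
      _ ≤ 2 * ‖x - p‖ * (μbar ^ 2 / μbar ^ k * μbar ^ n) := by
          have h1 := pow_two_sub_le hμb0 hμbar n k
          have h2 : (0:ℝ) ≤ 2 * ‖x - p‖ := by positivity
          nlinarith
      _ = 2 * ‖x - p‖ * (μbar ^ 2 / μbar ^ k) * μbar ^ n := by ring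
  exact cauchySeq_tendsto_of_complete hcs

end ST3

/-- For an infinite family of nonexpansive self-maps `T i` of a nonempty closed
convex `C ⊆ H` with a common fixed point, and `0 < μ i ≤ μbar < 1`:
(i) for each `x ∈ C` and `k ≥ 1` the limit `lim_n U n k x` exists;
(ii) the map `W x := lim_n W n x` is a nonexpansive self-map of `C` with
`Fix(W) = ⋂_{i=1}^∞ Fix(T i)`. -/
theorem stmt_11 {H : Type*} [NormedAddCommGroup H] [InnerProductSpace ℝ H]
    [CompleteSpace H]
    (C : Set H) (hCne : C.Nonempty) (hCcl : IsClosed C) (hCcv : Convex ℝ C)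
    (T : ℕ → H → H)
    (hTmaps : ∀ i, 1 ≤ i → Set.MapsTo (T i) C C)
    (hTne : ∀ i, 1 ≤ i → ∀ x ∈ C, ∀ y ∈ C, ‖T i x - T i y‖ ≤ ‖x - y‖)
    (hFix : ∃ x ∈ C, ∀ i, 1 ≤ i → T i x = x)
    (μ : ℕ → ℝ) (μbar : ℝ) (hμbar : μbar < 1)
    (hμ : ∀ i, 1 ≤ i → 0 < μ i ∧ μ i ≤ μbar) :
    (∀ x ∈ C, ∀ k : ℕ, 1 ≤ k →
        ∃ L : H, Tendsto (fun n => Umap T μ n k x) atTop (𝓝 L)) ∧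
    ∃ W : H → H,
      (∀ x ∈ C, Tendsto (fun n => Wmap T μ n x) atTop (𝓝 (W x))) ∧
      Set.MapsTo W C C ∧
      (∀ x ∈ C, ∀ y ∈ C, ‖W x - W y‖ ≤ ‖x - y‖) ∧
      {x : H | x ∈ C ∧ W x = x}
        = ⋂ i ∈ Set.Ici 1, {x : H | x ∈ C ∧ T i x = x} := by
  obtain ⟨p, hp, hfixp⟩ := hFix
  have part1 : ∀ x ∈ C, ∀ k : ℕ, 1 ≤ k →
      ∃ L : H, Tendsto (fun n => Umap T μ n k x) atTop (𝓝 L) :=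
    fun x hx k hk => Umap_exists_lim hCcv hTmaps hTne hμbar hμ hp hfixp k hk hx
  refine ⟨part1, ?_⟩
  haveI : Nonempty H := ⟨p⟩
  set Wf : H → H := fun x => limUnder atTop (fun n => Wmap T μ n x) with hWf
  have hWtend : ∀ x ∈ C, Tendsto (fun n => Wmap T μ n x) atTop (𝓝 (Wf x)) := by
    intro x hx
    obtain ⟨L, hL⟩ := part1 x hx 1 le_rfl
    have hL' : Tendsto (fun n => Wmap T μ n x) atTop (𝓝 L) := hL
    have : Wf x = L := hL'.limUnder_eq
    rw [this]; exact hL'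
  have hWC : Set.MapsTo Wf C C := fun x hx =>
    hCcl.mem_of_tendsto (hWtend x hx)
      (Eventually.of_forall fun n => Umap_mem hCcv hTmaps hμbar hμ n 1 le_rfl hx)
  have hWne : ∀ x ∈ C, ∀ y ∈ C, ‖Wf x - Wf y‖ ≤ ‖x - y‖ := by
    intro x hx y hy
    have h1 : Tendsto (fun n => ‖Wmap T μ n x - Wmap T μ n y‖) atTop
        (𝓝 ‖Wf x - Wf y‖) := ((hWtend x hx).sub (hWtend y hy)).norm
    exact le_of_tendsto h1 (Eventually.of_forall fun n =>
      Umap_nonexp hCcv hTmaps hTne hμbar hμ n 1 le_rfl hx hy)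
  refine ⟨Wf, hWtend, hWC, hWne, ?_⟩
  ext z
  simp only [Set.mem_setOf_eq, Set.mem_iInter, Set.mem_Ici]
  constructor
  · rintro ⟨hzC, hzW⟩
    set y : ℕ → H := fun k => limUnder atTop (fun n => Umap T μ n k z) with hydef
    have hyt : ∀ k, 1 ≤ k → Tendsto (fun n => Umap T μ n k z) atTop (𝓝 (y k)) := by
      intro k hk
      obtain ⟨L, hL⟩ := part1 z hzC k hk
      have : y k = L := hL.limUnder_eq
      rw [this]; exact hL
    have hy1 : y 1 = z := by
      have h1 : Tendsto (fun n => Umap T μ n 1 z) atTop (𝓝 (Wf z)) := hWtend z hzC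
      exact (tendsto_nhds_unique (hyt 1 le_rfl) h1).trans hzW
    have hyC : ∀ k, 1 ≤ k → y k ∈ C := fun k hk =>
      hCcl.mem_of_tendsto (hyt k hk)
        (Eventually.of_forall fun n => Umap_mem hCcv hTmaps hμbar hμ n k hk hzC)
    have hyle : ∀ k, 1 ≤ k → ‖y k - p‖ ≤ ‖z - p‖ := by
      intro k hk
      refine le_of_tendsto ((hyt k hk).sub tendsto_const_nhds).norm
        (Eventually.of_forall fun n => ?_)
      calc ‖Umap T μ n k z - p‖ = ‖Umap T μ n k z - Umap T μ n k p‖ := by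
            rw [Umap_fixed hfixp n k hk]
        _ ≤ ‖z - p‖ := Umap_nonexp hCcv hTmaps hTne hμbar hμ n k hk hzC hp
    have hrec : ∀ k, 1 ≤ k → y k = μ k • T k (y (k + 1)) + (1 - μ k) • z := by
      intro k hk
      have hTk : Tendsto (fun n => T k (Umap T μ n (k + 1) z)) atTop
          (𝓝 (T k (y (k + 1)))) := by
        rw [tendsto_iff_norm_sub_tendsto_zero]
        refine squeeze_zero (fun n => norm_nonneg _)
          (fun n => hTne k hk _ (Umap_mem hCcv hTmaps hμbar hμ n (k + 1) (by omega) hzC)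
            _ (hyC (k + 1) (by omega))) ?_
        exact tendsto_iff_norm_sub_tendsto_zero.mp (hyt (k + 1) (by omega))
      have h2 : Tendsto (fun n => μ k • T k (Umap T μ n (k + 1) z) + (1 - μ k) • z)
          atTop (𝓝 (μ k • T k (y (k + 1)) + (1 - μ k) • z)) :=
        (hTk.const_smul (μ k)).add tendsto_const_nhds
      have h3 : (fun n => μ k • T k (Umap T μ n (k + 1) z) + (1 - μ k) • z)
          =ᶠ[atTop] (fun n => Umap T μ n k z) := by
        filter_upwards [eventually_ge_atTop k] with n hn
        exact (Umap_of_le T μ (n := n) (k := k) hn z).symm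
      exact tendsto_nhds_unique (hyt k hk) (h2.congr' h3)
    have key : ∀ k, 1 ≤ k → ‖y k - p‖ = ‖z - p‖ →
        T k (y (k + 1)) = z ∧ ‖y (k + 1) - p‖ = ‖z - p‖ := by
      intro k hk hnorm
      have hμk1 : 0 < μ k := (hμ k hk).1
      have hμk2 : μ k < 1 := lt_of_le_of_lt (hμ k hk).2 hμbar
      have ha : ‖T k (y (k + 1)) - p‖ ≤ ‖z - p‖ := by
        have h1 : ‖T k (y (k + 1)) - T k p‖ ≤ ‖y (k + 1) - p‖ :=
          hTne k hk _ (hyC (k + 1) (by omega)) p hp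
        rw [hfixp k hk] at h1
        exact h1.trans (hyle (k + 1) (by omega))
      have hyk : y k - p = μ k • (T k (y (k + 1)) - p) + (1 - μ k) • (z - p) := by
        rw [hrec k hk]; module
      have hid := combo_norm_sq (μ k) (T k (y (k + 1)) - p) (z - p)
      rw [← hyk, hnorm] at hid
      have hsub : T k (y (k + 1)) - p - (z - p) = T k (y (k + 1)) - z := by abel
      rw [hsub] at hid
      have hz0 : ‖T k (y (k + 1)) - z‖ = 0 := by
        have hn2 := norm_nonneg (T k (y (k + 1)) - p)
        have h4 : ‖T k (y (k + 1)) - p‖ ^ 2 ≤ ‖z - p‖ ^ 2 := pow_le_pow_left₀ hn2 ha 2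
        have hprod : μ k * (1 - μ k) * ‖T k (y (k + 1)) - z‖ ^ 2 ≤ 0 := by
          nlinarith [mul_le_mul_of_nonneg_left h4 hμk1.le]
        have h6 : 0 < μ k * (1 - μ k) := mul_pos hμk1 (by linarith)
        have h5 : ‖T k (y (k + 1)) - z‖ ^ 2 ≤ 0 := by
          by_contra hX
          push_neg at hX
          have := mul_pos h6 hX
          linarith
        have h7 : ‖T k (y (k + 1)) - z‖ ^ 2 = 0 := le_antisymm h5 (sq_nonneg _)
        rwa [pow_eq_zero_iff two_ne_zero] at h7
      have haz : T k (y (k + 1)) = z := by rwa [norm_eq_zero, sub_eq_zero] at hz0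
      refine ⟨haz, le_antisymm (hyle (k + 1) (by omega)) ?_⟩
      calc ‖z - p‖ = ‖T k (y (k + 1)) - p‖ := by rw [haz]
        _ = ‖T k (y (k + 1)) - T k p‖ := by rw [hfixp k hk]
        _ ≤ ‖y (k + 1) - p‖ := hTne k hk _ (hyC (k + 1) (by omega)) p hp
    have hR : ∀ k, 1 ≤ k → ‖y k - p‖ = ‖z - p‖ := by
      intro k hk
      induction k, hk using Nat.le_induction with
      | base => rw [hy1]
      | succ k hk ih => exact (key k hk ih).2
    intro i hi
    refine ⟨hzC, ?_⟩
    have h1 := (key i hi (hR i hi)).1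
    have h2 := (key (i + 1) (by omega) (hR (i + 1) (by omega))).1
    have h3 : y (i + 1) = z := by rw [hrec (i + 1) (by omega), h2]; module
    calc T i z = T i (y (i + 1)) := by rw [h3]
      _ = z := h1
  · intro hz
    have hzC : z ∈ C := (hz 1 le_rfl).1
    refine ⟨hzC, ?_⟩
    have hfz : ∀ i, 1 ≤ i → T i z = z := fun i hi => (hz i hi).2
    have hconst : Tendsto (fun n => Wmap T μ n z) atTop (𝓝 z) :=
      Tendsto.congr (fun n => (Umap_fixed hfz n 1 le_rfl).symm) tendsto_const_nhds
    exact tendsto_nhds_unique (hWtend z hzC) hconst
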